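/- For every nontrivial character χ of H(n+1, F_q) there is a unique (n−1)-dimensional subspace X(χ) ∈ B_q(n, n−1) such that p(χ)(X̂(χ)) ≠ 0, where for Y ∈ B_q(n) we write Ŷ for the span of Y and the standard basis vector e_{n+1}. Moreover, for every Y ∈ B_q(n, n−1), the number of nontrivial characters χ of H(n+1,F_q) with X(χ) = Y equals q − 1. -/

import Mathlib

/-- The copy of `F^m` inside `F^n`: vectors whose coordinates of index `≥ m`
vanish. -/
def coordSpace (F : Type) [Field F] (n m : ℕ) : Submodule F (Fin n → F) where
  carrier := {v | ∀ i : Fin n, m ≤ (i : ℕ) → v i = 0}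
  add_mem' := by
    intro a b ha hb i hi
    simp [ha i hi, hb i hi]
  zero_mem' := by intro i hi; rfl
  smul_mem' := by
    intro c v hv i hi
    simp [hv i hi]

/-- The element of the group `H(n+1, F_q)` with parameter `a ∈ F^n`. -/
def hmat (F : Type) [Field F] (n : ℕ) (a : Fin n → F) :
    Matrix (Fin (n + 1)) (Fin (n + 1)) F :=
  fun i j =>
    if i = j then 1
    else if h : (i : ℕ) < n ∧ (j : ℕ) = n then a ⟨(i : ℕ), h.1⟩ else 0

/-- The element `p(χ)(X) = ∑_{g ∈ H(n+1,F_q)} conj(χ(g)) · (gX)` of the free complex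
vector space on subspaces of `F^(n+1)`, realized as a complex-valued function. -/
noncomputable def pchi (F : Type) [Field F] [Fintype F] (n : ℕ)
    (χ : (Fin n → F) → ℂ) (X : Submodule F (Fin (n + 1) → F)) :
    Submodule F (Fin (n + 1) → F) → ℂ :=
  open Classical in
  fun Y => ∑ a : Fin n → F,
    if Submodule.map (Matrix.mulVecLin (hmat F n a)) X = Y
    then (starRingEnd ℂ) (χ a) else 0

/-- `Ŷ`: the span of `Y ⊆ F^n ⊆ F^(n+1)` and the last standard basis vector
`e_(n+1)`. -/
def ehat (F : Type) [Field F] (n : ℕ) (Y : Submodule F (Fin (n + 1) → F)) :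
    Submodule F (Fin (n + 1) → F) :=
  Y ⊔ Submodule.span F {Pi.single (Fin.last n) (1 : F)}

/-! ### Auxiliary material -/

open Module Submodule

section Aux

variable {F : Type} [Field F] {n : ℕ}

/-- The linear embedding `F^n → F^(n+1)` appending a zero coordinate. -/
def emb (F : Type) [Field F] (n : ℕ) : (Fin n → F) →ₗ[F] (Fin (n + 1) → F) where
  toFun v := Fin.snoc v 0
  map_add' u v := by
    funext i
    refine Fin.lastCases ?_ (fun j => ?_) i <;>
      simp [Fin.snoc_last, Fin.snoc_castSucc]
  map_smul' c v := by
    funext i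
    refine Fin.lastCases ?_ (fun j => ?_) i <;>
      simp [Fin.snoc_last, Fin.snoc_castSucc]

lemma emb_apply_last (v : Fin n → F) : emb F n v (Fin.last n) = 0 := by
  show (Fin.snoc v (0 : F) : Fin (n+1) → F) (Fin.last n) = 0
  simp

lemma emb_apply_castSucc (v : Fin n → F) (i : Fin n) :
    emb F n v (Fin.castSucc i) = v i := by
  show (Fin.snoc v (0 : F) : Fin (n+1) → F) (Fin.castSucc i) = v i
  simp

lemma emb_apply_lt (v : Fin n → F) (i : Fin (n+1)) (hi : (i : ℕ) < n) :
    emb F n v i = v ⟨(i : ℕ), hi⟩ := by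
  have h : i = Fin.castSucc ⟨(i : ℕ), hi⟩ := by
    apply Fin.ext; simp
  conv_lhs => rw [h]
  rw [emb_apply_castSucc]

lemma emb_injective : Function.Injective (emb F n) := by
  intro u v h
  funext i
  have := congrFun h (Fin.castSucc i)
  rwa [emb_apply_castSucc, emb_apply_castSucc] at this

lemma mem_coordSpace_iff (v : Fin (n+1) → F) :
    v ∈ coordSpace F (n+1) n ↔ v (Fin.last n) = 0 := by
  constructor
  · intro h
    exact h (Fin.last n) (le_of_eq (Fin.val_last n).symm)
  · intro h i hi
    have hi' : i = Fin.last n := by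
      apply Fin.ext
      have := i.isLt
      simp only [Fin.val_last]
      omega
    rwa [hi']

lemma emb_mem_coordSpace (v : Fin n → F) : emb F n v ∈ coordSpace F (n+1) n :=
  (mem_coordSpace_iff _).mpr (emb_apply_last v)

lemma eq_emb_of_mem_coordSpace {v : Fin (n+1) → F} (hv : v ∈ coordSpace F (n+1) n) :
    emb F n (Fin.init v) = v := by
  have h0 : v (Fin.last n) = 0 := (mem_coordSpace_iff v).mp hv
  show (Fin.snoc (Fin.init v) (0 : F) : Fin (n+1) → F) = v
  conv_lhs => rw [← h0]
  exact Fin.snoc_init_self v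

lemma hmat_apply_eq (a : Fin n → F) (v : Fin (n+1) → F) :
    Matrix.mulVecLin (hmat F n a) v = v + v (Fin.last n) • emb F n a := by
  classical
  funext i
  rw [Matrix.mulVecLin_apply]
  show ∑ j, hmat F n a i j * v j = _
  have hterm : ∀ j, hmat F n a i j * v j
      = (if j = i then v i else 0)
        + (if j = Fin.last n then emb F n a i * v (Fin.last n) else 0) := by
    intro j
    unfold hmat
    rcases eq_or_ne i j with rfl | hij
    · rw [if_pos rfl, if_pos rfl, one_mul]
      by_cases hil : i = Fin.last n
      · subst hil; rw [if_pos rfl, emb_apply_last, zero_mul, add_zero]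
      · rw [if_neg hil, add_zero]
    · rw [if_neg hij]
      by_cases hjl : j = Fin.last n
      · subst hjl
        have hi : (i : ℕ) < n := Fin.val_lt_last hij
        rw [dif_pos ⟨hi, Fin.val_last n⟩, if_neg (fun hc => hij hc.symm), if_pos rfl,
          emb_apply_lt a i hi, zero_add]
      · have hj : ¬ ((i : ℕ) < n ∧ (j : ℕ) = n) := by
          rintro ⟨-, hj⟩
          exact hjl (Fin.ext (by simp [hj]))
        rw [dif_neg hj, zero_mul, if_neg (fun hc => hij hc.symm), if_neg hjl, add_zero]
  rw [Finset.sum_congr rfl (fun j _ => hterm j), Finset.sum_add_distrib,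
    Finset.sum_ite_eq' Finset.univ i (fun _ => v i),
    Finset.sum_ite_eq' Finset.univ (Fin.last n) (fun _ => emb F n a i * v (Fin.last n))]
  simp [mul_comm]

lemma hmat_add_eq (a b : Fin n → F) :
    Matrix.mulVecLin (hmat F n (a + b))
      = (Matrix.mulVecLin (hmat F n a)).comp (Matrix.mulVecLin (hmat F n b)) := by
  apply LinearMap.ext
  intro v
  simp only [LinearMap.comp_apply, hmat_apply_eq, map_add, Pi.add_apply, Pi.smul_apply,
    emb_apply_last, smul_eq_mul, mul_zero, add_zero, smul_add, zero_smul]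
  abel

lemma map_hmat_add (a b : Fin n → F) (X : Submodule F (Fin (n+1) → F)) :
    Submodule.map (Matrix.mulVecLin (hmat F n (a + b))) X
      = Submodule.map (Matrix.mulVecLin (hmat F n a))
          (Submodule.map (Matrix.mulVecLin (hmat F n b)) X) := by
  rw [hmat_add_eq, Submodule.map_comp]

lemma hmat_fixes {X : Submodule F (Fin (n+1) → F)} (hX : X ≤ coordSpace F (n+1) n)
    {x : Fin (n+1) → F} (hx : x ∈ X) (a : Fin n → F) :
    Matrix.mulVecLin (hmat F n a) x = x := by
  rw [hmat_apply_eq, (mem_coordSpace_iff x).mp (hX hx), zero_smul, add_zero]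

lemma map_ehat {X : Submodule F (Fin (n+1) → F)} (hX : X ≤ coordSpace F (n+1) n)
    (a : Fin n → F) :
    Submodule.map (Matrix.mulVecLin (hmat F n a)) (ehat F n X)
      = X ⊔ Submodule.span F {Pi.single (Fin.last n) (1 : F) + emb F n a} := by
  unfold ehat
  rw [Submodule.map_sup, Submodule.map_span, Set.image_singleton]
  congr 1
  · apply le_antisymm
    · rintro _ ⟨x, hx, rfl⟩
      rw [hmat_fixes hX hx]
      exact hx
    · intro x hx
      exact ⟨x, hx, hmat_fixes hX hx a⟩
  · congr 1
    rw [hmat_apply_eq]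
    simp

lemma sup_span_le_of_mem {X : Submodule F (Fin (n+1) → F)} {u v : Fin n → F}
    (h : emb F n (u - v) ∈ X) :
    X ⊔ Submodule.span F {Pi.single (Fin.last n) (1 : F) + emb F n u}
      ≤ X ⊔ Submodule.span F {Pi.single (Fin.last n) (1 : F) + emb F n v} := by
  apply sup_le le_sup_left
  rw [Submodule.span_le, Set.singleton_subset_iff]
  have heq : Pi.single (Fin.last n) (1 : F) + emb F n u
      = emb F n (u - v) + (Pi.single (Fin.last n) (1 : F) + emb F n v) := by
    rw [map_sub]; abel
  rw [heq]
  exact add_mem (Submodule.mem_sup_left h)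
    (Submodule.mem_sup_right (Submodule.mem_span_singleton_self _))

lemma sup_span_eq_iff {X : Submodule F (Fin (n+1) → F)} (hX : X ≤ coordSpace F (n+1) n)
    (u v : Fin n → F) :
    X ⊔ Submodule.span F {Pi.single (Fin.last n) (1 : F) + emb F n u}
      = X ⊔ Submodule.span F {Pi.single (Fin.last n) (1 : F) + emb F n v}
      ↔ emb F n (u - v) ∈ X := by
  constructor
  · intro h
    have hm : Pi.single (Fin.last n) (1 : F) + emb F n u
        ∈ X ⊔ Submodule.span F {Pi.single (Fin.last n) (1 : F) + emb F n v} := by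
      rw [← h]
      exact Submodule.mem_sup_right (Submodule.mem_span_singleton_self _)
    rw [Submodule.mem_sup] at hm
    obtain ⟨x, hx, y, hy, heq⟩ := hm
    obtain ⟨t, rfl⟩ := Submodule.mem_span_singleton.mp hy
    have hlast := congrFun heq (Fin.last n)
    simp only [Pi.add_apply, Pi.smul_apply, Pi.single_eq_same, emb_apply_last,
      smul_eq_mul] at hlast
    have hx0 : x (Fin.last n) = 0 := (mem_coordSpace_iff x).mp (hX hx)
    rw [hx0] at hlast
    have ht : t = 1 := by simpa using hlast
    rw [ht, one_smul] at heq
    have h3 : emb F n (u - v) = x := by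
      rw [map_sub]
      linear_combination -heq
    rw [h3]; exact hx
  · intro h
    apply le_antisymm (sup_span_le_of_mem h)
    apply sup_span_le_of_mem
    have : v - u = -(u - v) := by abel
    rw [this, map_neg]
    exact neg_mem h

lemma map_ehat_eq_iff {X : Submodule F (Fin (n+1) → F)} (hX : X ≤ coordSpace F (n+1) n)
    (a b : Fin n → F) :
    Submodule.map (Matrix.mulVecLin (hmat F n a)) (ehat F n X)
      = Submodule.map (Matrix.mulVecLin (hmat F n b)) (ehat F n X)
      ↔ emb F n (a - b) ∈ X := by
  rw [map_ehat hX a, map_ehat hX b, sup_span_eq_iff hX]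

lemma map_ehat_self_iff {X : Submodule F (Fin (n+1) → F)} (hX : X ≤ coordSpace F (n+1) n)
    (a : Fin n → F) :
    Submodule.map (Matrix.mulVecLin (hmat F n a)) (ehat F n X) = ehat F n X
      ↔ emb F n a ∈ X := by
  have h0 : ehat F n X
      = X ⊔ Submodule.span F {Pi.single (Fin.last n) (1 : F) + emb F n (0 : Fin n → F)} := by
    rw [map_zero, add_zero]
    rfl
  rw [map_ehat hX a]
  rw [h0, sup_span_eq_iff hX a 0, sub_zero]

end Aux

section Pchi

variable {F : Type} [Field F] [Fintype F] {n : ℕ}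

lemma pchi_ne_zero_iff {X : Submodule F (Fin (n+1) → F)} {χ : (Fin n → F) → ℂ}
    (hadd : ∀ a b, χ (a + b) = χ a * χ b)
    (hX : X ≤ coordSpace F (n+1) n) :
    pchi F n χ (ehat F n X) ≠ 0 ↔ ∀ a, emb F n a ∈ X → χ a = 1 := by
  classical
  constructor
  · intro hne
    by_contra hcon
    push_neg at hcon
    obtain ⟨a₀, ha₀X, ha₀⟩ := hcon
    apply hne
    funext Y
    rw [Pi.zero_apply]
    show (∑ a : Fin n → F,
      if Submodule.map (Matrix.mulVecLin (hmat F n a)) (ehat F n X) = Y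
      then (starRingEnd ℂ) (χ a) else 0) = 0
    set f : (Fin n → F) → ℂ := fun a =>
      if Submodule.map (Matrix.mulVecLin (hmat F n a)) (ehat F n X) = Y
      then (starRingEnd ℂ) (χ a) else 0 with hf
    have key : ∀ a : Fin n → F,
        Submodule.map (Matrix.mulVecLin (hmat F n (a + a₀))) (ehat F n X)
          = Submodule.map (Matrix.mulVecLin (hmat F n a)) (ehat F n X) := by
      intro a
      rw [map_hmat_add, (map_ehat_self_iff hX a₀).mpr ha₀X]
    have h1 : ∑ a : Fin n → F, f a = ∑ a : Fin n → F, f (a + a₀) :=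
      Fintype.sum_equiv (Equiv.addRight a₀) (fun a => f (a + a₀)) f (fun a => rfl) |>.symm
    have h2 : ∀ a : Fin n → F, f (a + a₀) = (starRingEnd ℂ) (χ a₀) * f a := by
      intro a
      rw [hf]
      simp only
      rw [key a, hadd a a₀, map_mul]
      by_cases hc : Submodule.map (Matrix.mulVecLin (hmat F n a)) (ehat F n X) = Y
      · rw [if_pos hc, if_pos hc]; ring
      · rw [if_neg hc, if_neg hc, mul_zero]
    have h3 : ∑ a : Fin n → F, f a = (starRingEnd ℂ) (χ a₀) * ∑ a : Fin n → F, f a := by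
      calc ∑ a : Fin n → F, f a = ∑ a : Fin n → F, f (a + a₀) := h1
        _ = ∑ a : Fin n → F, (starRingEnd ℂ) (χ a₀) * f a :=
            Finset.sum_congr rfl (fun a _ => h2 a)
        _ = (starRingEnd ℂ) (χ a₀) * ∑ a : Fin n → F, f a := (Finset.mul_sum _ _ _).symm
    have hc1 : (starRingEnd ℂ) (χ a₀) ≠ 1 := by
      intro hcc
      apply ha₀
      have := congrArg (starRingEnd ℂ) hcc
      rwa [Complex.conj_conj, map_one] at this
    have h4 : ((starRingEnd ℂ) (χ a₀) - 1) * (∑ a : Fin n → F, f a) = 0 := by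
      rw [sub_mul, one_mul, ← h3, sub_self]
    rcases mul_eq_zero.mp h4 with h | h
    · exact absurd (by linear_combination h) hc1
    · exact h
  · intro htriv h0
    have hval := congrFun h0 (ehat F n X)
    rw [Pi.zero_apply] at hval
    have hcomp : pchi F n χ (ehat F n X) (ehat F n X)
        = ∑ a : Fin n → F, if emb F n a ∈ X then (1 : ℂ) else 0 := by
      show (∑ a : Fin n → F,
        if Submodule.map (Matrix.mulVecLin (hmat F n a)) (ehat F n X) = ehat F n X
        then (starRingEnd ℂ) (χ a) else 0) = _
      refine Finset.sum_congr rfl (fun a _ => ?_)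
      by_cases hmem : emb F n a ∈ X
      · rw [if_pos ((map_ehat_self_iff hX a).mpr hmem), if_pos hmem, htriv a hmem, map_one]
      · rw [if_neg (fun hc => hmem ((map_ehat_self_iff hX a).mp hc)), if_neg hmem]
    rw [hcomp, Finset.sum_boole] at hval
    rw [Nat.cast_eq_zero, Finset.card_eq_zero] at hval
    have : (0 : Fin n → F) ∈ Finset.univ.filter (fun a => emb F n a ∈ X) := by
      rw [Finset.mem_filter]
      exact ⟨Finset.mem_univ _, by rw [map_zero]; exact X.zero_mem⟩
    rw [hval] at this
    exact absurd this (Finset.notMem_empty _)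

end Pchi

section Chars

variable {F : Type} [Field F] [Fintype F] {n : ℕ}

lemma char_ne_zero {G : Type} [AddGroup G] {χ : G → ℂ}
    (hadd : ∀ a b, χ (a + b) = χ a * χ b) (hzero : χ 0 = 1) (x : G) : χ x ≠ 0 := by
  intro h
  have h1 := hadd x (-x)
  rw [add_neg_cancel, hzero, h, zero_mul] at h1
  exact one_ne_zero h1

lemma hyperplane_unique (hn : 1 ≤ n) {χ : (Fin n → F) → ℂ}
    (hadd : ∀ a b, χ (a + b) = χ a * χ b) (hnt : ∃ a, χ a ≠ 1)
    {W W' : Submodule F (Fin n → F)}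
    (hW : finrank F W = n - 1) (hW' : finrank F W' = n - 1)
    (htriv : ∀ v ∈ W, χ v = 1) (htriv' : ∀ v ∈ W', χ v = 1) : W = W' := by
  have hrank : finrank F (Fin n → F) = n := by
    rw [Module.finrank_fintype_fun_eq_card, Fintype.card_fin]
  by_contra hne
  have hns : ¬ W' ≤ W := by
    intro hle
    exact hne (Submodule.eq_of_le_of_finrank_le hle (le_of_eq (hW.trans hW'.symm))).symm
  have hlt : W < W ⊔ W' := by
    rcases lt_or_eq_of_le (le_sup_left : W ≤ W ⊔ W') with h | h
    · exact h
    · exact absurd (sup_eq_left.mp h.symm) hns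
  have h1 : n - 1 < finrank F ↥(W ⊔ W') := hW ▸ Submodule.finrank_lt_finrank_of_lt hlt
  have h2 : finrank F ↥(W ⊔ W') ≤ n :=
    le_trans (Submodule.finrank_le (W ⊔ W')) (le_of_eq hrank)
  have h3 : finrank F ↥(W ⊔ W') = n := by omega
  have htop : W ⊔ W' = ⊤ := Submodule.eq_top_of_finrank_eq (h3.trans hrank.symm)
  obtain ⟨a, ha⟩ := hnt
  apply ha
  have haW : a ∈ W ⊔ W' := htop ▸ Submodule.mem_top
  rw [Submodule.mem_sup] at haW
  obtain ⟨w, hw, w', hw', rfl⟩ := haW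
  rw [hadd, htriv w hw, htriv' w' hw', one_mul]

lemma exists_unique_hyperplane (hn : 1 ≤ n) {χ : (Fin n → F) → ℂ}
    (hadd : ∀ a b, χ (a + b) = χ a * χ b) (hzero : χ 0 = 1) (hnt : ∃ a, χ a ≠ 1) :
    ∃! W : Submodule F (Fin n → F), finrank F W = n - 1 ∧ ∀ v ∈ W, χ v = 1 := by
  classical
  set W : Submodule F (Fin n → F) :=
    { carrier := {v | ∀ c : F, χ (c • v) = 1}
      add_mem' := by
        intro a b ha hb c
        rw [smul_add, hadd, ha c, hb c, one_mul]
      zero_mem' := by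
        intro c
        rw [smul_zero]
        exact hzero
      smul_mem' := by
        intro d v hv c
        rw [smul_smul]
        exact hv (c * d) } with hWdef
  have htriv : ∀ v ∈ W, χ v = 1 := by
    intro v hv
    have := hv (1 : F)
    rwa [one_smul] at this
  have hWne : W ≠ ⊤ := by
    intro h
    obtain ⟨a, ha⟩ := hnt
    exact ha (htriv a (h ▸ Submodule.mem_top))
  -- the counting argument
  let Ψ : (Fin n → F) → AddChar F ℂ := fun v =>
    { toFun := fun c => χ (c • v)
      map_zero_eq_one' := by show χ ((0 : F) • v) = 1; rw [zero_smul]; exact hzero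
      map_add_eq_mul' := fun c d => by
        show χ ((c + d) • v) = χ (c • v) * χ (d • v)
        rw [add_smul]; exact hadd _ _ }
  have hΨsub : ∀ v w : Fin n → F, Ψ v = Ψ w → v - w ∈ W := by
    intro v w h c
    have hc := DFunLike.congr_fun h c
    simp only [Ψ, AddChar.coe_mk] at hc
    have hsplit : χ (c • v) = χ (c • (v - w)) * χ (c • w) := by
      rw [← hadd, ← smul_add, sub_add_cancel]
    rw [hsplit] at hc
    have := char_ne_zero hadd hzero (c • w)
    field_simp at hc
    exact hc
  let g : ((Fin n → F) ⧸ W) → AddChar F ℂ := fun q => Ψ q.out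
  have hginj : Function.Injective g := by
    intro q q' h
    have hmem : q.out - q'.out ∈ W := hΨsub _ _ h
    have := (Submodule.Quotient.eq W).mpr hmem
    rwa [← Submodule.Quotient.mk''_eq_mk, ← Submodule.Quotient.mk''_eq_mk,
      Quotient.out_eq', Quotient.out_eq'] at this
  letI : Fintype ((Fin n → F) ⧸ W) := Fintype.ofFinite _
  have hle : Fintype.card ((Fin n → F) ⧸ W) ≤ Fintype.card (AddChar F ℂ) :=
    Fintype.card_le_of_injective g hginj
  rw [AddChar.card_eq] at hle
  have hcardQ : Fintype.card ((Fin n → F) ⧸ W)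
      = Fintype.card F ^ finrank F ((Fin n → F) ⧸ W) := card_eq_pow_finrank
  have hq1 : 1 < Fintype.card F := Fintype.one_lt_card
  have hfrQ : finrank F ((Fin n → F) ⧸ W) ≤ 1 := by
    apply (Nat.pow_le_pow_iff_right hq1).mp
    rw [pow_one, ← hcardQ]
    exact hle
  have hrank : finrank F (Fin n → F) = n := by
    rw [Module.finrank_fintype_fun_eq_card, Fintype.card_fin]
  have hsum := Submodule.finrank_quotient_add_finrank W
  rw [hrank] at hsum
  have hWlt : finrank F ↥W < n :=
    lt_of_lt_of_le (Submodule.finrank_lt hWne) (le_of_eq hrank)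
  have hWfr : finrank F ↥W = n - 1 := by omega
  exact ⟨W, ⟨hWfr, htriv⟩, fun W' ⟨hW'fr, htriv'⟩ =>
    hyperplane_unique hn hadd hnt hW'fr hWfr htriv' htriv⟩

lemma card_nontrivial_addChar :
    Nat.card {ψ : AddChar F ℂ // ψ ≠ 1} = Fintype.card F - 1 := by
  classical
  rw [Nat.card_eq_fintype_card]
  have h := Fintype.card_subtype_compl (fun ψ : AddChar F ℂ => ψ = 1)
  rw [Fintype.card_subtype_eq, AddChar.card_eq] at h
  exact h

lemma card_chars_eq {W : Submodule F (Fin n → F)} (φ : (Fin n → F) →ₗ[F] F)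
    (hker : LinearMap.ker φ = W) (hsurj : Function.Surjective φ) :
    Nat.card {χ : (Fin n → F) → ℂ //
      (∀ a b, χ (a + b) = χ a * χ b) ∧ χ 0 = 1 ∧ (∃ a, χ a ≠ 1) ∧ (∀ a ∈ W, χ a = 1)}
      = Fintype.card F - 1 := by
  rw [← card_nontrivial_addChar (F := F)]
  apply Nat.card_congr
  apply Equiv.symm
  refine Equiv.ofBijective (fun ψ => ⟨fun v => ψ.1 (φ v), ?_, ?_, ?_, ?_⟩) ⟨?_, ?_⟩
  · intro a b
    show ψ.1 (φ (a + b)) = ψ.1 (φ a) * ψ.1 (φ b)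
    rw [map_add, AddChar.map_add_eq_mul]
  · show ψ.1 (φ 0) = 1
    rw [map_zero, AddChar.map_zero_eq_one]
  · obtain ⟨x, hx⟩ := AddChar.ne_one_iff.mp ψ.2
    obtain ⟨v, rfl⟩ := hsurj x
    exact ⟨v, hx⟩
  · intro a ha
    show ψ.1 (φ a) = 1
    have h0 : φ a = 0 := by
      rw [← LinearMap.mem_ker, hker]
      exact ha
    rw [h0, AddChar.map_zero_eq_one]
  · intro ψ ψ' h
    apply Subtype.ext
    apply AddChar.ext
    intro x
    obtain ⟨v, rfl⟩ := hsurj x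
    exact congrFun (congrArg Subtype.val h) v
  · rintro ⟨χ, hadd, hzero, hnt, htriv⟩
    have hconst : ∀ v w : Fin n → F, φ v = φ w → χ v = χ w := by
      intro v w h
      have hm : v - w ∈ W := by
        rw [← hker, LinearMap.mem_ker, map_sub, h, sub_self]
      have h1 : χ v = χ (v - w) * χ w := by
        rw [← hadd, sub_add_cancel]
      rw [h1, htriv _ hm, one_mul]
    set σ := Function.surjInv hsurj with hσ
    have hσeq : ∀ t, φ (σ t) = t := fun t => Function.surjInv_eq hsurj t
    set ψ₀ : AddChar F ℂ :=
      { toFun := fun t => χ (σ t)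
        map_zero_eq_one' := by
          show χ (σ 0) = 1
          have h2 : χ (σ 0) = χ 0 := hconst _ _ (by rw [hσeq, map_zero])
          rw [h2]; exact hzero
        map_add_eq_mul' := by
          intro s t
          show χ (σ (s + t)) = χ (σ s) * χ (σ t)
          have h1 : χ (σ (s + t)) = χ (σ s + σ t) :=
            hconst _ _ (by rw [hσeq, map_add, hσeq, hσeq])
          rw [h1, hadd] } with hψ₀
    have hψval : ∀ v, ψ₀ (φ v) = χ v := by
      intro v
      show χ (σ (φ v)) = χ v
      exact hconst _ _ (hσeq (φ v))
    have hψne : ψ₀ ≠ 1 := by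
      rw [AddChar.ne_one_iff]
      obtain ⟨v, hv⟩ := hnt
      exact ⟨φ v, by rw [hψval v]; exact hv⟩
    exact ⟨⟨ψ₀, hψne⟩, Subtype.ext (funext fun v => hψval v)⟩

lemma exists_phi {W : Submodule F (Fin n → F)} (hW : finrank F W = n - 1) (hn : 1 ≤ n) :
    ∃ φ : (Fin n → F) →ₗ[F] F, LinearMap.ker φ = W ∧ Function.Surjective φ := by
  have hrank : finrank F (Fin n → F) = n := by
    rw [Module.finrank_fintype_fun_eq_card, Fintype.card_fin]
  have hsum := Submodule.finrank_quotient_add_finrank W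
  rw [hrank, hW] at hsum
  have hq1 : finrank F ((Fin n → F) ⧸ W) = 1 := by omega
  let b := Module.finBasisOfFinrankEq F ((Fin n → F) ⧸ W) hq1
  let e : ((Fin n → F) ⧸ W) ≃ₗ[F] F := b.equivFun.trans (LinearEquiv.funUnique (Fin 1) F F)
  refine ⟨(e : ((Fin n → F) ⧸ W) →ₗ[F] F).comp W.mkQ, ?_, ?_⟩
  · rw [LinearMap.ker_comp, LinearEquiv.ker, Submodule.comap_bot, Submodule.ker_mkQ]
  · exact e.surjective.comp (Submodule.mkQ_surjective W)

end Chars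

section Assembly

variable {F : Type} [Field F] [Fintype F] {n : ℕ}

lemma map_comap_emb {X : Submodule F (Fin (n+1) → F)} (hX : X ≤ coordSpace F (n+1) n) :
    Submodule.map (emb F n) (Submodule.comap (emb F n) X) = X := by
  apply le_antisymm (Submodule.map_comap_le _ _)
  intro v hv
  refine ⟨Fin.init v, ?_, eq_emb_of_mem_coordSpace (hX hv)⟩
  show Fin.init v ∈ Submodule.comap (emb F n) X
  rw [Submodule.mem_comap, eq_emb_of_mem_coordSpace (hX hv)]
  exact hv

lemma finrank_comap_emb {X : Submodule F (Fin (n+1) → F)} (hX : X ≤ coordSpace F (n+1) n) :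
    finrank F (Submodule.comap (emb F n) X) = finrank F X := by
  have h := LinearEquiv.finrank_eq
    (Submodule.equivMapOfInjective (emb F n) emb_injective (Submodule.comap (emb F n) X))
  rwa [map_comap_emb hX] at h

lemma finrank_map_emb (W : Submodule F (Fin n → F)) :
    finrank F (Submodule.map (emb F n) W) = finrank F W :=
  (LinearEquiv.finrank_eq (Submodule.equivMapOfInjective (emb F n) emb_injective W)).symm

lemma map_emb_le_coordSpace (W : Submodule F (Fin n → F)) :
    Submodule.map (emb F n) W ≤ coordSpace F (n+1) n := by
  rintro _ ⟨w, hw, rfl⟩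
  exact emb_mem_coordSpace w

end Assembly

/-- For every nontrivial character `χ` of `H(n+1, F_q)` there is a unique
`X(χ) ∈ B_q(n, n−1)` with `p(χ)(X̂(χ)) ≠ 0`; moreover, for every `Y ∈ B_q(n, n−1)`
there are exactly `q − 1` nontrivial characters `χ` with `X(χ) = Y`. -/
theorem Xchi_exists_unique (F : Type) [Field F] [Fintype F] (n : ℕ) (hn : 1 ≤ n) :
    (∀ χ : (Fin n → F) → ℂ, (∀ a b, χ (a + b) = χ a * χ b) → χ 0 = 1 →
      (∃ a, χ a ≠ 1) →
      ∃! X : Submodule F (Fin (n + 1) → F),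
        (X ≤ coordSpace F (n + 1) n ∧ Module.finrank F X = n - 1) ∧
          pchi F n χ (ehat F n X) ≠ 0) ∧
    (∀ Y : Submodule F (Fin (n + 1) → F), Y ≤ coordSpace F (n + 1) n →
      Module.finrank F Y = n - 1 →
      Nat.card {χ : (Fin n → F) → ℂ //
          (∀ a b, χ (a + b) = χ a * χ b) ∧ χ 0 = 1 ∧ (∃ a, χ a ≠ 1) ∧
            pchi F n χ (ehat F n Y) ≠ 0} = Fintype.card F - 1) := by
  constructor
  · intro χ hadd hzero hnt
    obtain ⟨W, ⟨hWfr, hWtriv⟩, hWuniq⟩ := exists_unique_hyperplane hn hadd hzero hnt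
    refine ⟨Submodule.map (emb F n) W, ⟨⟨map_emb_le_coordSpace W, ?_⟩, ?_⟩, ?_⟩
    · rw [finrank_map_emb, hWfr]
    · rw [pchi_ne_zero_iff hadd (map_emb_le_coordSpace W)]
      intro a ha
      obtain ⟨w, hw, heq⟩ := ha
      rw [← emb_injective heq]
      exact hWtriv w hw
    · rintro X' ⟨⟨hX'le, hX'fr⟩, hX'p⟩
      have hfr' : finrank F (Submodule.comap (emb F n) X') = n - 1 := by
        rw [finrank_comap_emb hX'le, hX'fr]
      have hWeq : Submodule.comap (emb F n) X' = W := by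
        refine hWuniq _ ⟨hfr', fun a ha => ?_⟩
        exact ((pchi_ne_zero_iff hadd hX'le).mp hX'p) a (Submodule.mem_comap.mp ha)
      rw [← map_comap_emb hX'le, hWeq]
  · intro Y hYle hYfr
    have hWfr : finrank F (Submodule.comap (emb F n) Y) = n - 1 := by
      rw [finrank_comap_emb hYle, hYfr]
    obtain ⟨φ, hker, hsurj⟩ := exists_phi hWfr hn
    rw [← card_chars_eq φ hker hsurj]
    apply Nat.card_congr
    apply Equiv.subtypeEquivRight
    intro χ
    constructor
    · rintro ⟨h1, h2, h3, h4⟩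
      exact ⟨h1, h2, h3, fun a ha =>
        ((pchi_ne_zero_iff h1 hYle).mp h4) a (Submodule.mem_comap.mp ha)⟩
    · rintro ⟨h1, h2, h3, h4⟩
      exact ⟨h1, h2, h3, (pchi_ne_zero_iff h1 hYle).mpr
        (fun a ha => h4 a (Submodule.mem_comap.mpr ha))⟩
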